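/- arXiv:1412.3680 — 3 statements merged into one kernel-verified Lean document; each statement's English description precedes it below -/
import Mathlib

section
/- Let f : [0,∞) → ℝ be convex and continuous. Suppose for every n a function D^Q_n, assigning a value in ℝ ∪ {+∞} to each pair of n×n density matrices, satisfies: (monotonicity) D^Q_k(Λ(σ0), Λ(σ1)) ≤ D^Q_n(σ0, σ1) for every CPTP map Λ from n×n to k×k complex matrices and all n×n density matrices σ0, σ1; and (classical agreement) for all probability vectors p0, p1 on a finite set, D^Q(diag(p0), diag(p1)) = D_f(p0‖p1). Then D^Q_n(σ0, σ1) ≤ D_f^max(σ0‖σ1) for all n and all n×n density matrices σ0, σ1. -/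
open Matrix
open scoped Kronecker ComplexOrder

noncomputable section

/-- A probability vector on a finite set. -/
def ProbVec {X : Type*} [Fintype X] (p : X → ℝ) : Prop :=
  (∀ x, 0 ≤ p x) ∧ ∑ x, p x = 1

/-- A density matrix: positive semidefinite with trace one. -/
def IsDensityMatrix {n : ℕ} (ρ : Matrix (Fin n) (Fin n) ℂ) : Prop :=
  ρ.PosSemidef ∧ ρ.trace = 1

/-- The action of a classical-to-quantum channel, given by a family of density
matrices `ρ`, on a probability vector `p`. -/
def cqApply {X : Type*} [Fintype X] {n : ℕ} (ρ : X → Matrix (Fin n) (Fin n) ℂ)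
    (p : X → ℝ) : Matrix (Fin n) (Fin n) ℂ :=
  ∑ x, (p x : ℂ) • ρ x

/-- The recession slope `lim_{λ → ∞} f(λ)/λ`, as an extended real number.
(For convex continuous `f` the limit exists and equals this limsup.) -/
def recessionSlope (f : ℝ → ℝ) : EReal :=
  Filter.limsup (fun lam : ℝ => ((f lam / lam : ℝ) : EReal)) Filter.atTop

/-- The `f`-divergence of two probability vectors, valued in `ℝ ∪ {+∞}`
(with the convention `0 * ∞ = 0`, which holds for `EReal` multiplication). -/
def fDiv {X : Type*} [Fintype X] (f : ℝ → ℝ) (p0 p1 : X → ℝ) : EReal :=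
  ((∑ x, if 0 < p1 x then p1 x * f (p0 x / p1 x) else 0 : ℝ) : EReal)
    + ((∑ x, if 0 < p1 x then 0 else p0 x : ℝ) : EReal) * recessionSlope f

/-- The maximal `f`-divergence: the infimum of `D_f(q0‖q1)` over all classical
families mapped onto `(σ0, σ1)` by some classical-to-quantum channel. -/
def DfMax {n : ℕ} (f : ℝ → ℝ) (σ0 σ1 : Matrix (Fin n) (Fin n) ℂ) : EReal :=
  sInf { d : EReal |
    ∃ (m : ℕ) (q0 q1 : Fin m → ℝ) (ρ : Fin m → Matrix (Fin n) (Fin n) ℂ),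
      ProbVec q0 ∧ ProbVec q1 ∧ (∀ x, IsDensityMatrix (ρ x)) ∧
      cqApply ρ q0 = σ0 ∧ cqApply ρ q1 = σ1 ∧ d = fDiv f q0 q1 }

/-- Spectral functional calculus for Hermitian matrices (junk value `0` on
non-Hermitian input). -/
def hermCFC {n : ℕ} (f : ℝ → ℝ) (A : Matrix (Fin n) (Fin n) ℂ) :
    Matrix (Fin n) (Fin n) ℂ :=
  if hA : A.IsHermitian then
    (hA.eigenvectorUnitary : Matrix (Fin n) (Fin n) ℂ) *
      Matrix.diagonal (fun i => (f (hA.eigenvalues i) : ℂ)) *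
      (star (hA.eigenvectorUnitary : Matrix (Fin n) (Fin n) ℂ))
  else 0

/-- Spectral pseudo-inverse: invert the nonzero eigenvalues. -/
def pinvMat {n : ℕ} (A : Matrix (Fin n) (Fin n) ℂ) : Matrix (Fin n) (Fin n) ℂ :=
  hermCFC (fun x => if x = 0 then 0 else x⁻¹) A

/-- Orthogonal projection onto the range of a Hermitian matrix
(spectral projection onto the nonzero eigenvalues). -/
def rangeProj {n : ℕ} (A : Matrix (Fin n) (Fin n) ℂ) : Matrix (Fin n) (Fin n) ℂ :=
  hermCFC (fun x => if x = 0 then 0 else 1) A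

/-- `A ↦ (A⁺)^{1/2}`, the square root of the spectral pseudo-inverse. -/
def invSqrtMat {n : ℕ} (A : Matrix (Fin n) (Fin n) ℂ) : Matrix (Fin n) (Fin n) ℂ :=
  hermCFC (fun x => if x = 0 then 0 else (Real.sqrt x)⁻¹) A

/-- Generalized Schur complement of `σ0` with respect to a projection `π`:
`π σ0 π − π σ0 (1−π) · ((1−π) σ0 (1−π))⁺ · (1−π) σ0 π`. -/
def schurCompl {n : ℕ} (σ0 π : Matrix (Fin n) (Fin n) ℂ) :
    Matrix (Fin n) (Fin n) ℂ :=
  π * σ0 * π -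
    (π * σ0 * (1 - π)) * pinvMat ((1 - π) * σ0 * (1 - π)) * ((1 - π) * σ0 * π)

/-- `σ̃0`: the generalized Schur complement of `σ0` with respect to the
projection onto the range of `σ1`. -/
def sigmaTilde {n : ℕ} (σ0 σ1 : Matrix (Fin n) (Fin n) ℂ) :
    Matrix (Fin n) (Fin n) ℂ :=
  schurCompl σ0 (rangeProj σ1)

/-- The closed-form expression
`F_f(σ0,σ1) = tr σ1 f(σ1^{-1/2} σ̃0 σ1^{-1/2}) + (1 − tr σ̃0) L(f)`. -/
def Ff {n : ℕ} (f : ℝ → ℝ) (σ0 σ1 : Matrix (Fin n) (Fin n) ℂ) : EReal :=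
  (((σ1 * hermCFC f (invSqrtMat σ1 * sigmaTilde σ0 σ1 * invSqrtMat σ1)).trace.re : ℝ) : EReal)
    + ((1 - (sigmaTilde σ0 σ1).trace.re : ℝ) : EReal) * recessionSlope f

/-- Operator convexity of a function on `[0,∞)`, via the spectral functional
calculus on positive semidefinite complex matrices. -/
def OperatorConvex (f : ℝ → ℝ) : Prop :=
  ∀ (n : ℕ) (A B : Matrix (Fin n) (Fin n) ℂ), A.PosSemidef → B.PosSemidef →
    ∀ t : ℝ, 0 ≤ t → t ≤ 1 →
      (t • hermCFC f A + (1 - t) • hermCFC f B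
        - hermCFC f (t • A + (1 - t) • B)).PosSemidef

/-- A CPTP map between matrix algebras: trace preserving and with positive
semidefinite Choi matrix. -/
def IsCPTP {n k : ℕ}
    (Λ : Matrix (Fin n) (Fin n) ℂ →ₗ[ℂ] Matrix (Fin k) (Fin k) ℂ) : Prop :=
  (∀ A, (Λ A).trace = A.trace) ∧
    (∑ i : Fin n, ∑ j : Fin n,
      (Λ (Matrix.single i j 1)) ⊗ₖ (Matrix.single i j (1 : ℂ))).PosSemidef

/-- The largest eigenvalue of a Hermitian matrix (junk value `0` otherwise). -/
def lmax {k : ℕ} (W : Matrix (Fin k) (Fin k) ℂ) : ℝ :=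
  if h : W.IsHermitian then ⨆ i, h.eigenvalues i else 0

/-- A stochastic matrix (`P y x` is the probability of `y` given `x`). -/
def IsStochastic {X Y : Type*} [Fintype X] [Fintype Y] (P : Y → X → ℝ) : Prop :=
  (∀ y x, 0 ≤ P y x) ∧ ∀ x, ∑ y, P y x = 1

/-- The action of a stochastic matrix on a probability vector. -/
def stocApply {X Y : Type*} [Fintype X] [Fintype Y] (P : Y → X → ℝ)
    (p : X → ℝ) : Y → ℝ :=
  fun y => ∑ x, P y x * p x

end

/-!
The classical-to-quantum channel `(ρₓ)` extends to the CPTP map `A ↦ ∑ₓ Aₓₓ • ρₓ`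
(measure in the computational basis, then prepare `ρₓ`), which sends `diag q` to `Γ(q)`.
Hence for every classical pair `(q0, q1)` realising `(σ0, σ1)`, monotonicity and
classical agreement give `D^Q(σ0, σ1) ≤ D^Q(diag q0, diag q1) = D_f(q0‖q1)`; taking the
infimum over such pairs gives the bound by `D_f^max`.
-/

namespace Matrix

variable {m n : ℕ}

def cqChannel (ρ : Fin m → Matrix (Fin n) (Fin n) ℂ) :
    Matrix (Fin m) (Fin m) ℂ →ₗ[ℂ] Matrix (Fin n) (Fin n) ℂ where
  toFun A := ∑ x, A x x • ρ x
  map_add' A B := by simp only [add_apply, add_smul, Finset.sum_add_distrib]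
  map_smul' c A := by
    simp only [smul_apply, smul_eq_mul, mul_smul, Finset.smul_sum, RingHom.id_apply]

variable (ρ : Fin m → Matrix (Fin n) (Fin n) ℂ)

lemma cqChannel_apply (A : Matrix (Fin m) (Fin m) ℂ) :
    cqChannel ρ A = ∑ x, A x x • ρ x := rfl

lemma cqChannel_single (i j : Fin m) :
    cqChannel ρ (single i j 1) = if i = j then ρ i else 0 := by
  split_ifs with hij
  · subst hij
    rw [cqChannel_apply, Finset.sum_eq_single i (fun x _ hx => by simp [Ne.symm hx]) (by simp)]
    simp
  · rw [cqChannel_apply]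
    refine Finset.sum_eq_zero fun x _ => ?_
    rw [single_apply, if_neg fun h => hij (h.1.trans h.2.symm), zero_smul]

lemma cqChannel_diagonal (p : Fin m → ℝ) :
    cqChannel ρ (diagonal fun i => (p i : ℂ)) = cqApply ρ p := by
  simp only [cqChannel_apply, diagonal_apply_eq, cqApply]

lemma trace_cqChannel (hρ : ∀ x, (ρ x).trace = 1) (A : Matrix (Fin m) (Fin m) ℂ) :
    (cqChannel ρ A).trace = A.trace := by
  rw [cqChannel_apply, trace_sum]
  simp only [trace_smul, hρ, smul_eq_mul, mul_one]
  rfl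

lemma choi_cqChannel :
    ∑ i : Fin m, ∑ j : Fin m, cqChannel ρ (single i j 1) ⊗ₖ single i j (1 : ℂ) =
      ∑ i, ρ i ⊗ₖ single i i (1 : ℂ) := by
  refine Finset.sum_congr rfl fun i _ => ?_
  rw [Fintype.sum_eq_single i fun j hj => by
      rw [cqChannel_single, if_neg (Ne.symm hj), zero_kronecker],
    cqChannel_single, if_pos rfl]

lemma isCPTP_cqChannel (hρ : ∀ x, IsDensityMatrix (ρ x)) : IsCPTP (cqChannel ρ) := by
  refine ⟨trace_cqChannel ρ fun x => (hρ x).2, ?_⟩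
  rw [choi_cqChannel]
  refine posSemidef_sum _ fun i _ => (hρ i).1.kronecker ?_
  rw [← diagonal_single, posSemidef_diagonal_iff]
  intro j
  rw [Pi.single_apply]
  split_ifs <;> norm_num

end Matrix

lemma ProbVec.isDensityMatrix_diagonal {m : ℕ} {p : Fin m → ℝ} (hp : ProbVec p) :
    IsDensityMatrix (diagonal fun i => (p i : ℂ)) := by
  refine ⟨posSemidef_diagonal_iff.mpr fun i => Complex.zero_le_real.mpr (hp.1 i), ?_⟩
  rw [trace_diagonal, ← Complex.ofReal_sum, hp.2, Complex.ofReal_one]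

theorem monotone_classical_le_DfMax_general (f : ℝ → ℝ)
    (DQ : (n : ℕ) → Matrix (Fin n) (Fin n) ℂ → Matrix (Fin n) (Fin n) ℂ → EReal)
    (hmono : ∀ (n k : ℕ)
      (Λ : Matrix (Fin n) (Fin n) ℂ →ₗ[ℂ] Matrix (Fin k) (Fin k) ℂ), IsCPTP Λ →
      ∀ σ0 σ1 : Matrix (Fin n) (Fin n) ℂ,
        IsDensityMatrix σ0 → IsDensityMatrix σ1 →
        DQ k (Λ σ0) (Λ σ1) ≤ DQ n σ0 σ1)
    (hclass : ∀ (m : ℕ) (p0 p1 : Fin m → ℝ), ProbVec p0 → ProbVec p1 →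
      DQ m (Matrix.diagonal (fun i => (p0 i : ℂ)))
          (Matrix.diagonal (fun i => (p1 i : ℂ))) = fDiv f p0 p1)
    {n : ℕ} (σ0 σ1 : Matrix (Fin n) (Fin n) ℂ) :
    DQ n σ0 σ1 ≤ DfMax f σ0 σ1 := by
  refine le_sInf fun d ⟨m, q0, q1, ρ, hq0, hq1, hρ, h0, h1, hd⟩ => ?_
  rw [hd, ← hclass m q0 q1 hq0 hq1, ← h0, ← h1, ← cqChannel_diagonal, ← cqChannel_diagonal]
  exact hmono m n (cqChannel ρ) (isCPTP_cqChannel ρ hρ) _ _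
    hq0.isDensityMatrix_diagonal hq1.isDensityMatrix_diagonal

/-- Any CPTP-monotone quantity agreeing with `D_f` on classical
(diagonal) pairs is dominated by `D_f^max`. -/
theorem monotone_classical_le_DfMax (f : ℝ → ℝ)
    (hf : ConvexOn ℝ (Set.Ici 0) f) (hfc : ContinuousOn f (Set.Ici 0))
    (DQ : (n : ℕ) → Matrix (Fin n) (Fin n) ℂ → Matrix (Fin n) (Fin n) ℂ → EReal)
    (hmono : ∀ (n k : ℕ)
      (Λ : Matrix (Fin n) (Fin n) ℂ →ₗ[ℂ] Matrix (Fin k) (Fin k) ℂ), IsCPTP Λ →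
      ∀ σ0 σ1 : Matrix (Fin n) (Fin n) ℂ,
        IsDensityMatrix σ0 → IsDensityMatrix σ1 →
        DQ k (Λ σ0) (Λ σ1) ≤ DQ n σ0 σ1)
    (hclass : ∀ (m : ℕ) (p0 p1 : Fin m → ℝ), ProbVec p0 → ProbVec p1 →
      DQ m (Matrix.diagonal (fun i => (p0 i : ℂ)))
          (Matrix.diagonal (fun i => (p1 i : ℂ))) = fDiv f p0 p1)
    {n : ℕ} (σ0 σ1 : Matrix (Fin n) (Fin n) ℂ)
    (hσ0 : IsDensityMatrix σ0) (hσ1 : IsDensityMatrix σ1) :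
    DQ n σ0 σ1 ≤ DfMax f σ0 σ1 :=
  monotone_classical_le_DfMax_general f DQ hmono hclass σ0 σ1
end

section
/- For all n×n density matrices σ0, σ1 there exist a finite set X, probability vectors q0, q1 on X, and a classical-to-quantum channel Γ with Γ(q0) = σ0 and Γ(q1) = σ1, such that D_f(q0‖q1) = F_f(σ0, σ1) holds simultaneously for every convex continuous function f : [0,∞) → ℝ. -/
open Matrix
open scoped Kronecker ComplexOrder

/-!
The Schur complement `σ̃0` satisfies `0 ≤ σ̃0 ≤ σ0` and is supported on the range of `σ1`, so
`σ̃0 = σ1^{1/2} A σ1^{1/2}` with `A = σ1^{-1/2} σ̃0 σ1^{-1/2} ≥ 0`. Diagonalising `A = ∑ aᵢ Pᵢ` with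
rank-one projections `Pᵢ` gives `σ1 = ∑ Mᵢ` and `σ̃0 = ∑ aᵢ Mᵢ` for `Mᵢ = σ1^{1/2} Pᵢ σ1^{1/2} ≥ 0`.
The outcomes `i` with probabilities `(aᵢ tr Mᵢ, tr Mᵢ)` and states `Mᵢ / tr Mᵢ`, together with one
outcome with probabilities `(tr (σ0 - σ̃0), 0)` and state `(σ0 - σ̃0) / tr (σ0 - σ̃0)`, then realise
`(σ0, σ1)`, and `D_f(q0‖q1) = ∑ tr Mᵢ f(aᵢ) + tr (σ0 - σ̃0) L(f) = tr σ1 f(A) + (1 - tr σ̃0) L(f)`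
for every `f` at once.
-/

section FunctionalCalculus

variable {n : ℕ} {A : Matrix (Fin n) (Fin n) ℂ}

lemma hermCFC_eq_cfc (f : ℝ → ℝ) (A : Matrix (Fin n) (Fin n) ℂ) : hermCFC f A = cfc f A := by
  by_cases hA : A.IsHermitian
  · rw [hermCFC, dif_pos hA, hA.cfc_eq, IsHermitian.cfc, Unitary.conjStarAlgAut_apply]
    rfl
  · rw [hermCFC, dif_neg hA]
    exact (cfc_apply_of_not_predicate A hA).symm

lemma hermCFC_isHermitian (f : ℝ → ℝ) (A : Matrix (Fin n) (Fin n) ℂ) :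
    (hermCFC f A).IsHermitian := by
  rw [hermCFC_eq_cfc]
  exact cfc_predicate f A

lemma cfc_mul_cfc (f g : ℝ → ℝ) (A : Matrix (Fin n) (Fin n) ℂ) :
    cfc f A * cfc g A = cfc (fun x => f x * g x) A :=
  (cfc_mul f g A (A.finite_real_spectrum.continuousOn f)
    (A.finite_real_spectrum.continuousOn g)).symm

lemma Matrix.PosSemidef.cfc_congr (hA : A.PosSemidef) {f g : ℝ → ℝ}
    (hfg : ∀ x, 0 ≤ x → f x = g x) : cfc f A = cfc g A := by
  refine _root_.cfc_congr fun x hx => hfg x ?_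
  obtain ⟨i, rfl⟩ := hA.1.spectrum_real_eq_range_eigenvalues ▸ hx
  exact hA.eigenvalues_nonneg i

lemma rangeProj_isHermitian (A : Matrix (Fin n) (Fin n) ℂ) : (rangeProj A).IsHermitian :=
  hermCFC_isHermitian _ A

lemma isIdempotentElem_rangeProj (A : Matrix (Fin n) (Fin n) ℂ) :
    IsIdempotentElem (rangeProj A) := by
  simp only [IsIdempotentElem, rangeProj, hermCFC_eq_cfc, cfc_mul_cfc]
  congr 1
  ext x
  split_ifs <;> simp

lemma self_mul_pinvMat_mul_self (hA : A.IsHermitian) : A * pinvMat A * A = A := by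
  have hid : cfc (fun x : ℝ => x) A = A := cfc_id' ℝ A hA
  calc A * pinvMat A * A
      = cfc (fun x : ℝ => x) A * cfc (fun x : ℝ => if x = 0 then 0 else x⁻¹) A *
          cfc (fun x : ℝ => x) A := by
        rw [hid, pinvMat, hermCFC_eq_cfc]
    _ = cfc (fun x : ℝ => x) A := by
        rw [cfc_mul_cfc, cfc_mul_cfc]
        congr 1
        ext x
        split_ifs with hx
        · simp [hx]
        · field_simp
    _ = A := hid

lemma cfc_sqrt_mul_self (hA : A.PosSemidef) : cfc Real.sqrt A * cfc Real.sqrt A = A := by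
  rw [cfc_mul_cfc, hA.cfc_congr (g := fun x => x) fun x hx => Real.mul_self_sqrt hx]
  exact cfc_id' ℝ A hA.1

lemma cfc_sqrt_mul_invSqrtMat (hA : A.PosSemidef) :
    cfc Real.sqrt A * invSqrtMat A = rangeProj A := by
  rw [invSqrtMat, rangeProj, hermCFC_eq_cfc, hermCFC_eq_cfc, cfc_mul_cfc]
  refine hA.cfc_congr fun x hx => ?_
  split_ifs with h
  · simp
  · exact mul_inv_cancel₀ (Real.sqrt_ne_zero'.mpr (lt_of_le_of_ne hx (Ne.symm h)))

lemma invSqrtMat_mul_cfc_sqrt (hA : A.PosSemidef) :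
    invSqrtMat A * cfc Real.sqrt A = rangeProj A := by
  rw [invSqrtMat, rangeProj, hermCFC_eq_cfc, hermCFC_eq_cfc, cfc_mul_cfc]
  refine hA.cfc_congr fun x hx => ?_
  split_ifs with h
  · simp
  · exact inv_mul_cancel₀ (Real.sqrt_ne_zero'.mpr (lt_of_le_of_ne hx (Ne.symm h)))

end FunctionalCalculus

section RangeProjection

variable {k m : ℕ} (Y : Matrix (Fin m) (Fin k) ℂ)

lemma mul_conjTranspose_mul_pinvMat_mul : Y * (Yᴴ * pinvMat (Y * Yᴴ) * Y) = Y := by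
  set G := Y * Yᴴ with hG_def
  have hG : G.IsHermitian := isHermitian_mul_conjTranspose_self Y
  have hGP : (1 - G * pinvMat G) * G = 0 := by
    rw [Matrix.sub_mul, Matrix.one_mul, self_mul_pinvMat_mul_self hG, sub_self]
  have hzero : (1 - G * pinvMat G) * Y = 0 := by
    rw [← Matrix.self_mul_conjTranspose_eq_zero, conjTranspose_mul, ← Matrix.mul_assoc,
      Matrix.mul_assoc _ Y, ← hG_def, hGP, Matrix.zero_mul]
  rw [Matrix.sub_mul, Matrix.one_mul, sub_eq_zero, eq_comm] at hzero
  simpa only [hG_def, Matrix.mul_assoc] using hzero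

lemma isHermitian_conjTranspose_mul_pinvMat_mul :
    (Yᴴ * pinvMat (Y * Yᴴ) * Y).IsHermitian :=
  isHermitian_conjTranspose_mul_mul Y (hermCFC_isHermitian _ (Y * Yᴴ))

lemma isIdempotentElem_conjTranspose_mul_pinvMat_mul :
    IsIdempotentElem (Yᴴ * pinvMat (Y * Yᴴ) * Y) := by
  rw [IsIdempotentElem, Matrix.mul_assoc _ Y, mul_conjTranspose_mul_pinvMat_mul]

end RangeProjection

section OrthogonalProjection

variable {n k : ℕ} {Q : Matrix (Fin k) (Fin k) ℂ}

lemma posSemidef_self_mul_conjTranspose_sub (hQ : Q.IsHermitian) (hQQ : IsIdempotentElem Q)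
    (X : Matrix (Fin n) (Fin k) ℂ) : (X * Xᴴ - X * Q * Xᴴ).PosSemidef := by
  have h : (1 - Q) * (1 - Q) = 1 - Q := (hQQ.one_sub).eq
  convert posSemidef_self_mul_conjTranspose (X * (1 - Q)) using 1
  rw [conjTranspose_mul, conjTranspose_sub, conjTranspose_one, hQ.eq]
  calc X * Xᴴ - X * Q * Xᴴ = X * ((1 - Q) * (1 - Q)) * Xᴴ := by
        rw [h, Matrix.mul_sub, Matrix.sub_mul, Matrix.mul_one]
    _ = X * (1 - Q) * ((1 - Q) * Xᴴ) := by simp only [Matrix.mul_assoc]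

lemma posSemidef_add_mul_conjTranspose_sub (hQ : Q.IsHermitian) (hQQ : IsIdempotentElem Q)
    {X Y : Matrix (Fin n) (Fin k) ℂ} (hYQ : Y * Q = Y) :
    ((X + Y) * (X + Y)ᴴ - (X * Xᴴ - X * Q * Xᴴ)).PosSemidef := by
  have hQY : Q * Yᴴ = Yᴴ := by simpa [hQ.eq] using congrArg conjTranspose hYQ
  convert posSemidef_self_mul_conjTranspose (X * Q + Y) using 1
  simp only [conjTranspose_add, conjTranspose_mul, hQ.eq, Matrix.add_mul, Matrix.mul_add,
    Matrix.mul_assoc, hQY, ← Matrix.mul_assoc Y Q, hYQ]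
  rw [← Matrix.mul_assoc Q Q, hQQ.eq]
  abel

end OrthogonalProjection

section SchurComplement

variable {n k : ℕ} {σ π : Matrix (Fin n) (Fin n) ℂ}

lemma schurCompl_self_mul_conjTranspose (hπ : π.IsHermitian) (Z : Matrix (Fin n) (Fin k) ℂ) :
    schurCompl (Z * Zᴴ) π = π * Z * (π * Z)ᴴ - π * Z *
      (((1 - π) * Z)ᴴ * pinvMat ((1 - π) * Z * ((1 - π) * Z)ᴴ) * ((1 - π) * Z)) * (π * Z)ᴴ := by
  have h1π : (1 - π)ᴴ = 1 - π := by rw [conjTranspose_sub, conjTranspose_one, hπ.eq]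
  simp only [schurCompl, conjTranspose_mul, hπ.eq, h1π, Matrix.mul_assoc]

/-- The witnesses are `X = π Z` and `Y = (1 - π) Z` for `σ = Z Zᴴ`, and `Q` the orthogonal
projection onto the range of `Yᴴ`. -/
lemma exists_schurCompl_eq (hσ : σ.PosSemidef) (hπ : π.IsHermitian) :
    ∃ (X Y Q : Matrix (Fin n) (Fin n) ℂ),
      Q.IsHermitian ∧ IsIdempotentElem Q ∧ Y * Q = Y ∧ σ = (X + Y) * (X + Y)ᴴ ∧
      schurCompl σ π = X * Xᴴ - X * Q * Xᴴ := by
  set Z := cfc Real.sqrt σ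
  have hZ : σ = Z * Zᴴ := by
    rw [IsHermitian.eq (cfc_predicate Real.sqrt σ), cfc_sqrt_mul_self hσ]
  refine ⟨π * Z, (1 - π) * Z, _, isHermitian_conjTranspose_mul_pinvMat_mul _,
    isIdempotentElem_conjTranspose_mul_pinvMat_mul _, mul_conjTranspose_mul_pinvMat_mul _, ?_, ?_⟩
  · rw [← Matrix.add_mul, add_sub_cancel, Matrix.one_mul, hZ]
  · rw [hZ, schurCompl_self_mul_conjTranspose hπ]

lemma posSemidef_schurCompl (hσ : σ.PosSemidef) (hπ : π.IsHermitian) :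
    (schurCompl σ π).PosSemidef := by
  obtain ⟨X, Y, Q, hQ, hQQ, -, -, hS⟩ := exists_schurCompl_eq hσ hπ
  exact hS ▸ posSemidef_self_mul_conjTranspose_sub hQ hQQ X

lemma posSemidef_sub_schurCompl (hσ : σ.PosSemidef) (hπ : π.IsHermitian) :
    (σ - schurCompl σ π).PosSemidef := by
  obtain ⟨X, Y, Q, hQ, hQQ, hYQ, hσZ, hS⟩ := exists_schurCompl_eq hσ hπ
  rw [hS]
  nth_rewrite 1 [hσZ]
  exact posSemidef_add_mul_conjTranspose_sub hQ hQQ hYQ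

lemma mul_schurCompl (hπ : IsIdempotentElem π) : π * schurCompl σ π = schurCompl σ π := by
  simp only [schurCompl, Matrix.mul_sub, ← Matrix.mul_assoc, hπ.eq]

lemma schurCompl_mul (hπ : IsIdempotentElem π) : schurCompl σ π * π = schurCompl σ π := by
  simp only [schurCompl, Matrix.sub_mul, Matrix.mul_assoc, hπ.eq]

end SchurComplement

section ClassicalRepresentation

variable {n k : ℕ}

lemma Matrix.PosSemidef.ofReal_re_trace {M : Matrix (Fin n) (Fin n) ℂ} (hM : M.PosSemidef) :
    ((M.trace.re : ℝ) : ℂ) = M.trace :=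
  (Complex.eq_re_of_ofReal_le (r := 0) (by simpa using hM.trace_nonneg)).symm

lemma Matrix.PosSemidef.re_trace_nonneg {M : Matrix (Fin n) (Fin n) ℂ} (hM : M.PosSemidef) :
    0 ≤ M.trace.re :=
  (Complex.nonneg_iff.mp hM.trace_nonneg).1

lemma exists_isDensityMatrix_smul_eq {M τ : Matrix (Fin n) (Fin n) ℂ} (hM : M.PosSemidef)
    (hτ : IsDensityMatrix τ) : ∃ ρ, IsDensityMatrix ρ ∧ (M.trace.re : ℂ) • ρ = M := by
  by_cases h : M.trace = 0
  · exact ⟨τ, hτ, by rw [h, (hM.trace_eq_zero_iff).mp h]; simp⟩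
  · refine ⟨M.trace⁻¹ • M, ⟨hM.smul (inv_nonneg.mpr hM.trace_nonneg), ?_⟩, ?_⟩
    · rw [trace_smul, smul_eq_mul, inv_mul_cancel₀ h]
    · rw [hM.ofReal_re_trace, smul_smul, mul_inv_cancel₀ h, one_smul]

lemma cqApply_snoc (ρ : Fin k → Matrix (Fin n) (Fin n) ℂ) (τ : Matrix (Fin n) (Fin n) ℂ)
    (p : Fin k → ℝ) (t : ℝ) :
    cqApply (Fin.snoc ρ τ : Fin (k + 1) → _) (Fin.snoc p t : Fin (k + 1) → ℝ) =
      ∑ i, (p i : ℂ) • ρ i + (t : ℂ) • τ := by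
  simp [cqApply, Fin.sum_univ_castSucc]

lemma probVec_snoc {p : Fin k → ℝ} {t : ℝ} (hp : ∀ i, 0 ≤ p i) (ht : 0 ≤ t)
    (hsum : ∑ i, p i + t = 1) : ProbVec (Fin.snoc p t : Fin (k + 1) → ℝ) := by
  refine ⟨Fin.lastCases (by simpa using ht) fun i => by simpa using hp i, ?_⟩
  simpa [Fin.sum_univ_castSucc] using hsum

lemma fDiv_snoc (f : ℝ → ℝ) {w : Fin k → ℝ} (hw : ∀ i, 0 ≤ w i) (a : Fin k → ℝ) (t : ℝ) :
    fDiv f (Fin.snoc (fun i => a i * w i) t : Fin (k + 1) → ℝ) (Fin.snoc w 0) =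
      ((∑ i, w i * f (a i) : ℝ) : EReal) + (t : EReal) * recessionSlope f := by
  have hterm : ∀ i, (if 0 < w i then w i * f (a i * w i / w i) else 0) = w i * f (a i) := by
    intro i
    rcases (hw i).lt_or_eq with hpos | hzero
    · rw [if_pos hpos, mul_div_cancel_right₀ _ hpos.ne']
    · simp [← hzero]
  have hrest : ∀ i, (if 0 < w i then 0 else a i * w i) = 0 := by
    intro i
    rcases (hw i).lt_or_eq with hpos | hzero
    · rw [if_pos hpos]
    · simp [← hzero]
  simp [fDiv, Fin.sum_univ_castSucc, hterm, hrest]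

lemma exists_repr_of_decomposition {σ0 σ1 R : Matrix (Fin n) (Fin n) ℂ}
    {M : Fin k → Matrix (Fin n) (Fin n) ℂ} {a : Fin k → ℝ}
    (hσ0 : IsDensityMatrix σ0) (hσ1 : IsDensityMatrix σ1) (hM : ∀ i, (M i).PosSemidef)
    (ha : ∀ i, 0 ≤ a i) (hR : R.PosSemidef)
    (h1 : ∑ i, M i = σ1) (h0 : ∑ i, (a i : ℂ) • M i + R = σ0) :
    ∃ (q0 q1 : Fin (k + 1) → ℝ) (ρ : Fin (k + 1) → Matrix (Fin n) (Fin n) ℂ),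
      ProbVec q0 ∧ ProbVec q1 ∧ (∀ x, IsDensityMatrix (ρ x)) ∧
      cqApply ρ q0 = σ0 ∧ cqApply ρ q1 = σ1 ∧
      ∀ f : ℝ → ℝ, fDiv f q0 q1 =
        ((∑ i, (M i).trace.re * f (a i) : ℝ) : EReal) + (R.trace.re : EReal) * recessionSlope f := by
  choose ρ hρ hρM using fun i => exists_isDensityMatrix_smul_eq (hM i) hσ1
  obtain ⟨ρR, hρR, hρRR⟩ := exists_isDensityMatrix_smul_eq hR hσ1
  set w := fun i => (M i).trace.re
  have hw : ∀ i, 0 ≤ w i := fun i => (hM i).re_trace_nonneg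
  have hsum1 : ∑ i, w i + 0 = 1 := by
    simpa [w, ← Complex.re_sum, ← trace_sum, h1] using congrArg Complex.re hσ1.2
  have hsum0 : ∑ i, a i * w i + R.trace.re = 1 := by
    simpa [trace_sum, trace_smul, hσ0.2, w] using congrArg (fun S => S.trace.re) h0
  refine ⟨Fin.snoc (fun i => a i * w i) R.trace.re, Fin.snoc w 0, Fin.snoc ρ ρR,
    probVec_snoc (fun i => mul_nonneg (ha i) (hw i)) hR.re_trace_nonneg hsum0,
    probVec_snoc hw le_rfl hsum1, Fin.lastCases (by simpa using hρR) fun i => by simpa using hρ i,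
    ?_, ?_, fun f => fDiv_snoc f hw a _⟩
  · rw [cqApply_snoc, hρRR, ← h0]
    congr 1
    refine Finset.sum_congr rfl fun i _ => ?_
    rw [Complex.ofReal_mul, mul_smul, hρM]
  · rw [cqApply_snoc, Complex.ofReal_zero, zero_smul, add_zero, ← h1]
    exact Finset.sum_congr rfl fun i _ => hρM i

end ClassicalRepresentation

section SpectralDecomposition

variable {n : ℕ} {A : Matrix (Fin n) (Fin n) ℂ}

noncomputable def Matrix.IsHermitian.eigenProj (hA : A.IsHermitian) (i : Fin n) : Matrix (Fin n) (Fin n) ℂ :=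
  vecMulVec ⇑(hA.eigenvectorBasis i) (star ⇑(hA.eigenvectorBasis i))

lemma Matrix.IsHermitian.posSemidef_eigenProj (hA : A.IsHermitian) (i : Fin n) :
    (hA.eigenProj i).PosSemidef :=
  posSemidef_vecMulVec_self_star _

lemma Matrix.IsHermitian.cfc_eq_sum_eigenProj (hA : A.IsHermitian) (f : ℝ → ℝ) :
    cfc f A = ∑ i, (f (hA.eigenvalues i) : ℂ) • hA.eigenProj i := by
  rw [hA.cfc_eq, IsHermitian.cfc, Unitary.conjStarAlgAut_apply]
  ext j k
  simp [eigenProj, Matrix.mul_apply, Matrix.sum_apply, vecMulVec_apply, diagonal_apply, mul_assoc,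
    mul_left_comm]

lemma Matrix.IsHermitian.mul_cfc_mul_eq_sum (hA : A.IsHermitian) (B : Matrix (Fin n) (Fin n) ℂ)
    (f : ℝ → ℝ) :
    B * cfc f A * B = ∑ i, (f (hA.eigenvalues i) : ℂ) • (B * hA.eigenProj i * B) := by
  simp only [hA.cfc_eq_sum_eigenProj, Finset.mul_sum, Finset.sum_mul, mul_smul_comm,
    smul_mul_assoc]

lemma Matrix.IsHermitian.mul_mul_eq_sum (hA : A.IsHermitian) (B : Matrix (Fin n) (Fin n) ℂ) :
    B * A * B = ∑ i, (hA.eigenvalues i : ℂ) • (B * hA.eigenProj i * B) := by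
  have hid : cfc (fun x : ℝ => x) A = A := cfc_id' ℝ A hA
  simpa only [hid] using hA.mul_cfc_mul_eq_sum B (fun x => x)

lemma Matrix.IsHermitian.mul_self_eq_sum (hA : A.IsHermitian) (B : Matrix (Fin n) (Fin n) ℂ) :
    B * B = ∑ i, B * hA.eigenProj i * B := by
  have hone : cfc (fun _ : ℝ => (1 : ℝ)) A = 1 := cfc_const_one ℝ A hA
  simpa [hone] using hA.mul_cfc_mul_eq_sum B (fun _ => 1)

lemma Matrix.IsHermitian.re_trace_mul_cfc (hA : A.IsHermitian) (B : Matrix (Fin n) (Fin n) ℂ)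
    (f : ℝ → ℝ) : (B * B * cfc f A).trace.re =
      ∑ i, (B * hA.eigenProj i * B).trace.re * f (hA.eigenvalues i) := by
  rw [Matrix.mul_assoc, trace_mul_comm, hA.mul_cfc_mul_eq_sum, trace_sum, Complex.re_sum]
  refine Finset.sum_congr rfl fun i _ => ?_
  rw [trace_smul, smul_eq_mul, Complex.re_ofReal_mul, mul_comm]

end SpectralDecomposition

section SigmaTilde

variable {n : ℕ} {σ0 σ1 : Matrix (Fin n) (Fin n) ℂ}

lemma posSemidef_invSqrtMat_mul_sigmaTilde_mul (hσ0 : σ0.PosSemidef) :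
    (invSqrtMat σ1 * sigmaTilde σ0 σ1 * invSqrtMat σ1).PosSemidef := by
  have hS : (invSqrtMat σ1).IsHermitian := hermCFC_isHermitian _ _
  have := (posSemidef_schurCompl hσ0 (rangeProj_isHermitian σ1)).conjTranspose_mul_mul_same
    (invSqrtMat σ1)
  rwa [hS.eq] at this

lemma cfc_sqrt_mul_mul_cfc_sqrt (hσ1 : σ1.PosSemidef) :
    cfc Real.sqrt σ1 * (invSqrtMat σ1 * sigmaTilde σ0 σ1 * invSqrtMat σ1) * cfc Real.sqrt σ1 =
      sigmaTilde σ0 σ1 := by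
  calc _ = (cfc Real.sqrt σ1 * invSqrtMat σ1) * sigmaTilde σ0 σ1 *
        (invSqrtMat σ1 * cfc Real.sqrt σ1) := by simp only [Matrix.mul_assoc]
    _ = sigmaTilde σ0 σ1 := by
      rw [cfc_sqrt_mul_invSqrtMat hσ1, invSqrtMat_mul_cfc_sqrt hσ1, sigmaTilde,
        mul_schurCompl (isIdempotentElem_rangeProj σ1),
        schurCompl_mul (isIdempotentElem_rangeProj σ1)]

end SigmaTilde

/-- There is a single classical family and channel realizing
`(σ0, σ1)` whose `f`-divergence equals `F_f(σ0,σ1)` simultaneously for all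
convex continuous `f`. -/
theorem exists_repr_achieving_Ff {n : ℕ} (σ0 σ1 : Matrix (Fin n) (Fin n) ℂ)
    (hσ0 : IsDensityMatrix σ0) (hσ1 : IsDensityMatrix σ1) :
    ∃ (m : ℕ) (q0 q1 : Fin m → ℝ) (ρ : Fin m → Matrix (Fin n) (Fin n) ℂ),
      ProbVec q0 ∧ ProbVec q1 ∧ (∀ x, IsDensityMatrix (ρ x)) ∧
      cqApply ρ q0 = σ0 ∧ cqApply ρ q1 = σ1 ∧
      ∀ f : ℝ → ℝ, ConvexOn ℝ (Set.Ici 0) f → ContinuousOn f (Set.Ici 0) →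
        fDiv f q0 q1 = Ff f σ0 σ1 := by
  simp only [Ff, hermCFC_eq_cfc]
  have hA := posSemidef_invSqrtMat_mul_sigmaTilde_mul (σ1 := σ1) hσ0.1
  have hrAr := cfc_sqrt_mul_mul_cfc_sqrt (σ0 := σ0) hσ1.1
  have hrr := cfc_sqrt_mul_self hσ1.1
  have hr : (cfc Real.sqrt σ1)ᴴ = cfc Real.sqrt σ1 := IsHermitian.eq (cfc_predicate _ _)
  generalize invSqrtMat σ1 * sigmaTilde σ0 σ1 * invSqrtMat σ1 = A at hA hrAr ⊢
  generalize cfc Real.sqrt σ1 = r at hrAr hrr hr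
  have hM : ∀ i, (r * hA.1.eigenProj i * r).PosSemidef := fun i => by
    simpa only [hr] using (hA.1.posSemidef_eigenProj i).mul_mul_conjTranspose_same r
  have h1 : ∑ i, r * hA.1.eigenProj i * r = σ1 := by rw [← hA.1.mul_self_eq_sum r, hrr]
  have h0 : ∑ i, (hA.1.eigenvalues i : ℂ) • (r * hA.1.eigenProj i * r) +
      (σ0 - sigmaTilde σ0 σ1) = σ0 := by
    rw [← hrAr, hA.1.mul_mul_eq_sum r, add_sub_cancel]
  obtain ⟨q0, q1, ρ, hq0, hq1, hρ, hΓ0, hΓ1, hdiv⟩ := exists_repr_of_decomposition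
    (R := σ0 - sigmaTilde σ0 σ1) hσ0 hσ1 hM hA.eigenvalues_nonneg
    (posSemidef_sub_schurCompl hσ0.1 (rangeProj_isHermitian σ1)) h1 h0
  refine ⟨_, q0, q1, ρ, hq0, hq1, hρ, hΓ0, hΓ1, fun f _ _ => ?_⟩
  rw [hdiv, ← hrr, hA.1.re_trace_mul_cfc, hrr, trace_sub, Complex.sub_re, hσ0.2, Complex.one_re]
end

section
/- Let X be a finite set and u the uniform probability vector on X. (a) A stochastic matrix P from X to X satisfies Pu = u if and only if P is doubly stochastic, i.e. additionally Σ_{x∈X} P(y|x) = 1 for every y ∈ X. (b) For probability vectors p, q on X, there exists a stochastic matrix P with Pp = q and Pu = u if and only if q lies in the convex hull of the set { p ∘ π : π a permutation of X }. -/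
/-!
Applying `P` to the constant vector `c` multiplies each row sum of `P` by `c`, so `P` fixes the
uniform vector exactly when all its row sums are `1`. Hence the stochastic matrices fixing `u` are
the doubly stochastic ones, which by Birkhoff's theorem form the convex hull of the permutation
matrices. Since `M ↦ M p` is linear, the vectors `M p` for doubly stochastic `M` form the convex
hull of the vectors `σ p = p ∘ σ`.
-/

open Matrix
open scoped Kronecker ComplexOrder

section

variable {X Y : Type*} [Fintype X] [Fintype Y]

theorem stocApply_eq_mulVec (P : Y → X → ℝ) (p : X → ℝ) :
    stocApply P p = Matrix.of P *ᵥ p :=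
  rfl

theorem stocApply_const (P : Y → X → ℝ) (c : ℝ) :
    stocApply P (fun _ => c) = fun y => (∑ x, P y x) * c := by
  funext y
  exact (Finset.sum_mul ..).symm

theorem stocApply_uniform_eq_uniform_iff (P : X → X → ℝ) :
    stocApply P (fun _ => (1 : ℝ) / Fintype.card X) = (fun _ => (1 : ℝ) / Fintype.card X) ↔
      ∀ y, ∑ x, P y x = 1 := by
  rw [stocApply_const, funext_iff]
  refine forall_congr' fun y => ?_
  have : Nonempty X := ⟨y⟩
  have hu : (1 : ℝ) / Fintype.card X ≠ 0 := by positivity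
  rw [mul_eq_right₀ hu]

theorem isStochastic_and_fix_uniform_iff_mem_doublyStochastic [DecidableEq X]
    (P : X → X → ℝ) :
    IsStochastic P ∧
        stocApply P (fun _ => (1 : ℝ) / Fintype.card X) = (fun _ => (1 : ℝ) / Fintype.card X) ↔
      Matrix.of P ∈ doublyStochastic ℝ X := by
  rw [stocApply_uniform_eq_uniform_iff, mem_doublyStochastic_iff_sum, IsStochastic]
  simp only [of_apply]
  tauto

theorem image_mulVec_doublyStochastic [DecidableEq X] (p : X → ℝ) :
    (· *ᵥ p) '' doublyStochastic ℝ X = convexHull ℝ {r | ∃ e : Equiv.Perm X, r = p ∘ e} := by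
  have hlin : IsLinearMap ℝ (· *ᵥ p : Matrix X X ℝ → X → ℝ) :=
    ⟨fun M N => add_mulVec M N p, fun c M => smul_mulVec c M p⟩
  rw [doublyStochastic_eq_convexHull_permMatrix, hlin.image_convexHull]
  congr 1
  ext r
  constructor
  · rintro ⟨_, ⟨σ, rfl⟩, rfl⟩
    exact ⟨σ, permMatrix_mulVec σ⟩
  · rintro ⟨σ, rfl⟩
    exact ⟨_, ⟨σ, rfl⟩, permMatrix_mulVec σ⟩

end

/-- (a) A stochastic matrix fixes the uniform distribution iff
it is doubly stochastic. (b) A stochastic matrix with `Pp = q`, `Pu = u` exists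
iff `q` is in the convex hull of the permutations of `p`. -/
theorem fix_uniform_iff_doublyStochastic_and_majorization {X : Type*} [Fintype X] :
    (∀ P : X → X → ℝ, IsStochastic P →
      (stocApply P (fun _ => (1 : ℝ) / Fintype.card X) =
          (fun _ => (1 : ℝ) / Fintype.card X) ↔ ∀ y, ∑ x, P y x = 1)) ∧
    (∀ p q : X → ℝ, ProbVec p → ProbVec q →
      ((∃ P : X → X → ℝ, IsStochastic P ∧ stocApply P p = q ∧
          stocApply P (fun _ => (1 : ℝ) / Fintype.card X) =
            (fun _ => (1 : ℝ) / Fintype.card X)) ↔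
        q ∈ convexHull ℝ {r : X → ℝ | ∃ e : Equiv.Perm X, r = p ∘ e})) := by
  classical
  refine ⟨fun P _ => stocApply_uniform_eq_uniform_iff P, fun p q _ _ => ?_⟩
  rw [← image_mulVec_doublyStochastic]
  constructor
  · rintro ⟨P, hP, rfl, hPu⟩
    exact ⟨Matrix.of P, (isStochastic_and_fix_uniform_iff_mem_doublyStochastic P).mp ⟨hP, hPu⟩,
      (stocApply_eq_mulVec P p).symm⟩
  · rintro ⟨M, hM, rfl⟩
    obtain ⟨hP, hPu⟩ := (isStochastic_and_fix_uniform_iff_mem_doublyStochastic M).mpr hM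
    exact ⟨M, hP, stocApply_eq_mulVec M p, hPu⟩
end
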